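/- arXiv:1109.4475 — 2 statements merged into one kernel-verified Lean document; each statement's English description precedes it below -/
import Mathlib

section
/- Let G be an undirected graph and let F be a maximal directed forest in the double directed graph of G (i.e., F is a facet of the complex of directed trees of the double direction of G), with roots x_1, ..., x_t. Then {x_1, ..., x_t} is a strongly independent set in G: it is an independent set and the neighborhoods N(x_i) are pairwise disjoint. -/
/-!
Let `x` be a root of a maximal directed forest `F` and `z` a neighbour of `x`. If `F` had no
directed path from `x` to `z`, adding the edge `z → x` would keep in-degrees at most one and
create no cycle, contradicting maximality; so every neighbour of a root is reached from it.
Two adjacent roots would then be joined by a nonempty path ending at a root, which is impossible.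
A common neighbour of two roots is reached from both, and walking back along the unique incoming
edges from that vertex shows the two roots coincide.
-/

/-- `IsDipath T a b p` : `p` is the list of successive vertices (after `a`) of a
directed path from `a` to `b` using edges of the relation `T`. -/
def IsDipath {V : Type} (T : V → V → Prop) : V → V → List V → Prop
  | a, b, [] => a = b
  | a, b, c :: p => T a c ∧ IsDipath T c b p

/-- `T` is a spanning directed rooted tree of the digraph `E` with root `r`:
its edges are edges of `E` and every vertex is reached by a unique directed path from `r`. -/
def IsSpanningDitree {V : Type} (E T : V → V → Prop) (r : V) : Prop :=
  (∀ x y, T x y → E x y) ∧ ∀ x : V, ∃! p : List V, IsDipath T r x p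

/-- The edge relation associated to a finite set of directed edges. -/
def edgeRel {V : Type} [DecidableEq V] (F : Finset (V × V)) : V → V → Prop :=
  fun x y => (x, y) ∈ F

/-- A finite set of directed edges is a directed forest in the digraph `E`:
all edges belong to `E`, every vertex has in-degree at most one, and there are
no directed cycles.  (Equivalently, it is a disjoint union of directed rooted trees.) -/
def IsDirectedForest {V : Type} [DecidableEq V] (E : V → V → Prop) (F : Finset (V × V)) : Prop :=
  (∀ e ∈ F, E e.1 e.2) ∧
  (∀ x y y' : V, (y, x) ∈ F → (y', x) ∈ F → y = y') ∧
  ∀ (x : V) (p : List V), p ≠ [] → ¬ IsDipath (edgeRel F) x x p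

/-- A facet of the complex of directed trees `Δ(E)`: a maximal directed forest. -/
def IsFacet {V : Type} [DecidableEq V] (E : V → V → Prop) (F : Finset (V × V)) : Prop :=
  IsDirectedForest E F ∧ ∀ F', IsDirectedForest E F' → F ⊆ F' → F' = F

section Dipath

variable {V : Type} {T : V → V → Prop}

@[simp]
lemma isDipath_nil {a b : V} : IsDipath T a b [] ↔ a = b := Iff.rfl

@[simp]
lemma isDipath_cons {a b c : V} {p : List V} :
    IsDipath T a b (c :: p) ↔ T a c ∧ IsDipath T c b p := Iff.rfl

lemma isDipath_append {a c : V} {p q : List V} :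
    IsDipath T a c (p ++ q) ↔ ∃ b, IsDipath T a b p ∧ IsDipath T b c q := by
  induction p generalizing a with
  | nil => simp
  | cons d p ih => simp [ih, and_assoc]

lemma isDipath_concat {a b c : V} {p : List V} :
    IsDipath T a b (p ++ [c]) ↔ c = b ∧ ∃ u, IsDipath T a u p ∧ T u c := by
  simp only [isDipath_append, isDipath_cons, isDipath_nil]
  exact ⟨fun ⟨u, hp, hu, hc⟩ => ⟨hc, u, hp, hu⟩, fun ⟨hc, u, hp, hu⟩ => ⟨u, hp, hu, hc⟩⟩

lemma IsDipath.eq_nil_of_forall_not_rel {a b : V} {p : List V} (h : IsDipath T a b p)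
    (hb : ∀ u, ¬ T u b) : p = [] := by
  rcases p.eq_nil_or_concat' with rfl | ⟨p, c, rfl⟩
  · rfl
  · obtain ⟨rfl, u, -, hu⟩ := isDipath_concat.1 h
    exact absurd hu (hb u)

lemma eq_of_isDipath_of_forall_not_rel (hdeg : ∀ x y y', T y x → T y' x → y = y')
    {x y z : V} {p q : List V} (hx : ∀ u, ¬ T u x) (hy : ∀ u, ¬ T u y)
    (hp : IsDipath T x z p) (hq : IsDipath T y z q) : x = y := by
  induction p using List.reverseRecOn generalizing z q with
  | nil =>
    obtain rfl : x = z := hp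
    obtain rfl := hq.eq_nil_of_forall_not_rel hx
    exact hq.symm
  | append_singleton p c ih =>
    obtain ⟨rfl, u, hpu, hu⟩ := isDipath_concat.1 hp
    rcases q.eq_nil_or_concat' with rfl | ⟨q, d, rfl⟩
    · obtain rfl : y = c := hq
      exact absurd hu (hy u)
    · obtain ⟨rfl, w, hqw, hw⟩ := isDipath_concat.1 hq
      obtain rfl := hdeg _ _ _ hu hw
      exact ih hpu hqw

end Dipath

section DirectedForest

variable {V : Type} [DecidableEq V]

lemma IsDipath.of_insert {F : Finset (V × V)} {u v a b : V} {p : List V}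
    (h : IsDipath (edgeRel (insert (u, v) F)) a b p) :
    IsDipath (edgeRel F) a b p ∨
      (∃ q, IsDipath (edgeRel F) a u q) ∧ ∃ r, IsDipath (edgeRel F) v b r := by
  induction p generalizing a with
  | nil => exact .inl h
  | cons c p ih =>
    obtain ⟨hac, hcb⟩ := h
    rcases Finset.mem_insert.1 hac with hnew | hold
    · obtain ⟨rfl, rfl⟩ := Prod.mk.inj hnew
      refine .inr ⟨⟨[], rfl⟩, ?_⟩
      rcases ih hcb with hcb | ⟨-, hvb⟩
      exacts [⟨p, hcb⟩, hvb]
    · rcases ih hcb with hcb | ⟨⟨q, hcu⟩, hvb⟩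
      exacts [.inl ⟨hold, hcb⟩, .inr ⟨⟨c :: q, hold, hcu⟩, hvb⟩]

lemma IsDirectedForest.insert {E : V → V → Prop} {F : Finset (V × V)}
    (hF : IsDirectedForest E F) {u v : V} (huv : E u v) (hv : ∀ w, (w, v) ∉ F)
    (hvu : ∀ p, ¬ IsDipath (edgeRel F) v u p) : IsDirectedForest E (insert (u, v) F) := by
  obtain ⟨hE, hdeg, hacyc⟩ := hF
  refine ⟨?_, ?_, ?_⟩
  · simp only [Finset.forall_mem_insert]
    exact ⟨huv, hE⟩
  · intro x y y' hy hy'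
    simp only [Finset.mem_insert, Prod.mk.injEq] at hy hy'
    rcases hy with ⟨rfl, rfl⟩ | hy <;> rcases hy' with ⟨rfl, hxv⟩ | hy'
    exacts [rfl, absurd hy' (hv y'), absurd (hxv ▸ hy) (hv y), hdeg x y y' hy hy']
  · intro x p hp hcyc
    rcases hcyc.of_insert with hcyc | ⟨⟨q, hxu⟩, ⟨r, hvx⟩⟩
    exacts [hacyc x p hp hcyc, hvu (r ++ q) (isDipath_append.2 ⟨x, hvx, hxu⟩)]

lemma IsFacet.exists_isDipath {E : V → V → Prop} {F : Finset (V × V)} (hF : IsFacet E F)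
    {u v : V} (hv : ∀ w, (w, v) ∉ F) (huv : E u v) : ∃ p, IsDipath (edgeRel F) v u p := by
  by_contra! hvu
  have hins := hF.2 _ (hF.1.insert huv hv hvu) (Finset.subset_insert _ _)
  exact hv u (hins ▸ Finset.mem_insert_self (u, v) F)

end DirectedForest

/-- If `F` is a facet of the complex of directed trees of the double directed graph of a
simple graph `G`, then the set of roots of `F` (vertices with no incoming `F`-edge) is a
strongly independent set in `G`: it is independent and neighborhoods of distinct roots
are disjoint. -/
theorem roots_of_facet_stronglyIndep {V : Type} [DecidableEq V] (G : SimpleGraph V)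
    (F : Finset (V × V)) (hF : IsFacet G.Adj F) :
    (∀ x y : V, (∀ z, (z, x) ∉ F) → (∀ z, (z, y) ∉ F) → ¬ G.Adj x y) ∧
    (∀ x y : V, (∀ z, (z, x) ∉ F) → (∀ z, (z, y) ∉ F) → x ≠ y →
      Disjoint (G.neighborSet x) (G.neighborSet y)) := by
  refine ⟨fun x y hx hy hxy => ?_, fun x y hx hy hne => Set.disjoint_left.2 fun z hxz hyz => ?_⟩
  · obtain ⟨p, hp⟩ := hF.exists_isDipath hx hxy.symm
    obtain rfl := hp.eq_nil_of_forall_not_rel hy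
    exact G.irrefl ((hp : x = y) ▸ hxy)
  · obtain ⟨p, hp⟩ := hF.exists_isDipath hx hxz.symm
    obtain ⟨q, hq⟩ := hF.exists_isDipath hy hyz.symm
    exact hne (eq_of_isDipath_of_forall_not_rel hF.1.2.1 hx hy hp hq)
end

section
/- For a basic tree T with 2n vertices whose double direction is D, the complex of directed trees Δ(D) is homotopy equivalent to the sphere S^{n-1}. -/
/-- The geometric realization of an abstract simplicial complex `K` on a finite vertex
set `α`: convex combinations of vertices whose support is (contained in) a face of `K`. -/
def geomRealization {α : Type} [Fintype α] (K : Finset α → Prop) : Set (α → ℝ) :=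
  {f | (∀ a : α, 0 ≤ f a) ∧ (∑ a : α, f a) = 1 ∧
    ∃ F : Finset α, K F ∧ ∀ a : α, f a ≠ 0 → a ∈ F}

section BasicTree

variable {V : Type} [Fintype V] [DecidableEq V]

/-- Hypotheses describing a basic tree with `2n` vertices: a tree `G` whose vertex set is
the disjoint union of the leaves `v 0, …, v (n-1)` (vertices of degree `1`) and the
non-leaves `u 0, …, u (n-1)`, with `v i` adjacent to `u i` (so every non-leaf is adjacent
to exactly one leaf). -/
structure IsBasicTree (n : ℕ) (G : SimpleGraph V) [DecidableRel G.Adj]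
    (v u : Fin n → V) : Prop where
  isTree : G.IsTree
  bij : Function.Bijective (Sum.elim v u : Fin n ⊕ Fin n → V)
  adj : ∀ i : Fin n, G.Adj (v i) (u i)
  leaf : ∀ i : Fin n, G.degree (v i) = 1
  nonleaf : ∀ i : Fin n, 2 ≤ n → G.degree (u i) ≠ 1

end BasicTree

/-!
Every vertex is a leaf `v j` or its neighbour `u j`. For a point `f` of `|Δ(D)|` compare, for
each `j`, the weight on the arc `v j → u j` with the rest of the weight entering `{v j, u j}`.
In-degree at most one and the absence of 2-cycles force one of the two to vanish, so the
differences form a nonzero vector of `ℝⁿ`, whose direction is a point of `S^{n-1}`.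
Conversely `y ↦ y / ‖y‖₁`, spread over the arcs `v j → u j` (where `y j > 0`) and `u j → v j`
(where `y j < 0`), embeds the boundary of the cross-polytope in `|Δ(D)|`, and composing the two
maps gives the identity of the sphere. On `|Δ(D)|` the composite moves `f` inside one simplex:
adding the arcs `u j → v j` for which `v j → u j` is missing from the support of `f` still gives
a directed forest, so the straight-line homotopy to the identity stays in `|Δ(D)|`.
-/

open Finset

theorem ContinuousMap.Homotopic.of_segment_subset {Y E : Type*} [TopologicalSpace Y]
    [AddCommGroup E] [TopologicalSpace E] [IsTopologicalAddGroup E] [Module ℝ E]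
    [ContinuousSMul ℝ E] {X : Set E} {f g : C(Y, X)}
    (h : ∀ y, segment ℝ (f y : E) (g y) ⊆ X) : f.Homotopic g :=
  ⟨{ toFun := fun p => ⟨AffineMap.lineMap (f p.2 : E) (g p.2) (p.1 : ℝ),
        h p.2 (lineMap_mem_segment ℝ _ _ p.1.2)⟩
     continuous_toFun := by
       simp only [AffineMap.lineMap_apply_module]
       fun_prop
     map_zero_left := fun y => by simp
     map_one_left := fun y => by simp }⟩

theorem ContinuousMap.HomotopyEquiv.nonempty_of_segment_subset {Y E : Type*}
    [TopologicalSpace Y] [AddCommGroup E] [TopologicalSpace E] [IsTopologicalAddGroup E]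
    [Module ℝ E] [ContinuousSMul ℝ E] {X : Set E} (g : C(X, Y)) (s : C(Y, X))
    (hgs : ∀ y, g (s y) = y) (hseg : ∀ x, segment ℝ (s (g x) : E) x ⊆ X) :
    Nonempty (ContinuousMap.HomotopyEquiv X Y) :=
  ⟨{ toFun := g
     invFun := s
     left_inv := ContinuousMap.Homotopic.of_segment_subset (f := s.comp g) (g := .id X) hseg
     right_inv := by rw [show g.comp s = ContinuousMap.id Y from ContinuousMap.ext hgs] }⟩

theorem sum_abs_pos {ι : Type*} [Fintype ι] {y : ι → ℝ} (hy : y ≠ 0) : 0 < ∑ j, |y j| := by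
  obtain ⟨j, hj⟩ := Function.ne_iff.mp hy
  exact sum_pos' (fun j _ => abs_nonneg (y j)) ⟨j, mem_univ j, abs_pos.mpr hj⟩

theorem ofLp_ne_zero_of_mem_unit_sphere {n : ℕ}
    (y : Metric.sphere (0 : EuclideanSpace ℝ (Fin n)) 1) :
    (y : EuclideanSpace ℝ (Fin n)).ofLp ≠ 0 :=
  fun h => ne_zero_of_mem_unit_sphere y ((WithLp.ofLp_eq_zero 2).mp h)

section SimplexFace

variable {α : Type} [Fintype α]

def simplexFace (F : Finset α) : Set (α → ℝ) :=
  {f | (∀ a, 0 ≤ f a) ∧ ∑ a, f a = 1 ∧ ∀ a, f a ≠ 0 → a ∈ F}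

theorem simplexFace_mono {F F' : Finset α} (h : F ⊆ F') : simplexFace F ⊆ simplexFace F' :=
  fun _ ⟨hf0, hf1, hfF⟩ => ⟨hf0, hf1, fun a ha => h (hfF a ha)⟩

theorem convex_simplexFace (F : Finset α) : Convex ℝ (simplexFace F) := by
  rintro f ⟨hf0, hf1, hfF⟩ f' ⟨hf0', hf1', hfF'⟩ t t' ht ht' htt'
  refine ⟨fun a => ?_, ?_, fun a ha => ?_⟩
  · exact add_nonneg (mul_nonneg ht (hf0 a)) (mul_nonneg ht' (hf0' a))
  · simp only [Pi.add_apply, Pi.smul_apply, smul_eq_mul, sum_add_distrib, ← mul_sum, hf1, hf1',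
      htt', mul_one]
  · by_contra haF
    simp [not_imp_comm.mp (hfF a) haF, not_imp_comm.mp (hfF' a) haF] at ha

theorem simplexFace_subset_geomRealization {K : Finset α → Prop} {F : Finset α} (hF : K F) :
    simplexFace F ⊆ geomRealization K :=
  fun _ ⟨hf0, hf1, hfF⟩ => ⟨hf0, hf1, F, hF, hfF⟩

theorem mem_simplexFace_support {K : Finset α → Prop} {f : α → ℝ}
    (hf : f ∈ geomRealization K) : f ∈ simplexFace {a | f a ≠ 0} :=
  ⟨hf.1, hf.2.1, fun a ha => by simpa using ha⟩

theorem support_mem_of_mem_geomRealization {K : Finset α → Prop}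
    (hK : ∀ F F', F' ⊆ F → K F → K F') {f : α → ℝ} (hf : f ∈ geomRealization K) :
    K {a | f a ≠ 0} := by
  obtain ⟨-, -, F, hF, hfF⟩ := hf
  exact hK F _ (fun a ha => hfF a (by simpa using ha)) hF

end SimplexFace

section DirectedForest

variable {V : Type}

theorem IsDipath.mono {T T' : V → V → Prop} (h : ∀ x y, T x y → T' x y) :
    ∀ {p : List V} {a b : V}, IsDipath T a b p → IsDipath T' a b p
  | [], _, _, hp => hp
  | _ :: _, _, _, hp => ⟨h _ _ hp.1, IsDipath.mono h hp.2⟩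

variable [DecidableEq V]

theorem IsDirectedForest.mono {E : V → V → Prop} {F F' : Finset (V × V)}
    (hF : IsDirectedForest E F) (h : F' ⊆ F) : IsDirectedForest E F' :=
  ⟨fun e he => hF.1 e (h he), fun x y y' hy hy' => hF.2.1 x y y' (h hy) (h hy'),
    fun x p hp hcyc => hF.2.2 x p hp (hcyc.mono fun _ _ hab => h hab)⟩

theorem IsDirectedForest.not_mem_swap {E : V → V → Prop} {F : Finset (V × V)}
    (hF : IsDirectedForest E F) {a b : V} (hab : (a, b) ∈ F) : (b, a) ∉ F :=
  fun hba => hF.2.2 a [b, a] (List.cons_ne_nil _ _) ⟨hab, hba, rfl⟩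

theorem IsDipath.of_continued {F F' : Finset (V × V)}
    (h : ∀ a b c, (a, b) ∈ F' → (b, c) ∈ F' → (a, b) ∈ F) :
    ∀ {p : List V} {a x y : V}, IsDipath (edgeRel F') a x p → (x, y) ∈ F' →
      IsDipath (edgeRel F) a x p
  | [], _, _, _, hp, _ => hp
  | [_], _, _, _, ⟨hab, rfl⟩, hxy => ⟨h _ _ _ hab hxy, rfl⟩
  | _ :: _ :: _, _, _, _, ⟨hab, hbc, hp⟩, hxy =>
    ⟨h _ _ _ hab hbc, IsDipath.of_continued h ⟨hbc, hp⟩ hxy⟩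

/-- Every arc of a closed dipath is followed by another arc of it. -/
theorem not_isDipath_self_of_continued {F F' : Finset (V × V)}
    (hF : ∀ x p, p ≠ [] → ¬ IsDipath (edgeRel F) x x p)
    (h : ∀ a b c, (a, b) ∈ F' → (b, c) ∈ F' → (a, b) ∈ F) :
    ∀ x p, p ≠ [] → ¬ IsDipath (edgeRel F') x x p
  | _, [], hp, _ => hp rfl
  | x, b :: p, hp, hcyc => hF x (b :: p) hp (hcyc.of_continued h hcyc.1)

theorem support_isDirectedForest [Fintype V] {E : V → V → Prop} {f : V × V → ℝ}
    (hf : f ∈ geomRealization (IsDirectedForest E)) : IsDirectedForest E {c | f c ≠ 0} :=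
  support_mem_of_mem_geomRealization (fun _ _ h hF => hF.mono h) hf

end DirectedForest

section PendantMatching

variable {V : Type} {n : ℕ}

structure IsPendantMatching (G : SimpleGraph V) (v u : Fin n → V) : Prop where
  bijective : Function.Bijective (Sum.elim v u)
  adj : ∀ i, G.Adj (v i) (u i)
  eq_of_adj : ∀ i x, G.Adj x (v i) → x = u i

theorem IsBasicTree.isPendantMatching [Fintype V] [DecidableEq V] {G : SimpleGraph V}
    [DecidableRel G.Adj] {v u : Fin n → V} (h : IsBasicTree n G v u) :
    IsPendantMatching G v u where
  bijective := h.bij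
  adj := h.adj
  eq_of_adj i x hx := by
    obtain ⟨w, hw⟩ := card_eq_one.mp (h.leaf i)
    have hx' : x ∈ G.neighborFinset (v i) := (G.mem_neighborFinset _ _).mpr hx.symm
    have hu : u i ∈ G.neighborFinset (v i) := (G.mem_neighborFinset _ _).mpr (h.adj i)
    rw [hw, mem_singleton] at hx' hu
    rw [hx', hu]

namespace IsPendantMatching

variable {G : SimpleGraph V} {v u : Fin n → V} (hP : IsPendantMatching G v u)
include hP

theorem leaf_ne_nonleaf (i j : Fin n) : v i ≠ u j :=
  fun h => Sum.inl_ne_inr (hP.bijective.injective (a₁ := .inl i) (a₂ := .inr j) h)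

theorem leaf_injective : Function.Injective v :=
  fun i j h => Sum.inl_injective (hP.bijective.injective (a₁ := .inl i) (a₂ := .inl j) h)

theorem nonleaf_injective : Function.Injective u :=
  fun i j h => Sum.inr_injective (hP.bijective.injective (a₁ := .inr i) (a₂ := .inr j) h)

theorem sum_eq [Fintype V] {M : Type} [AddCommMonoid M] (h : V → M) :
    ∑ x, h x = ∑ j, (h (v j) + h (u j)) := by
  rw [← hP.bijective.sum_comp, Fintype.sum_sum_type, sum_add_distrib]
  rfl

end IsPendantMatching

variable [DecidableEq V] {G : SimpleGraph V} {v u : Fin n → V}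

def forwardArcs (v u : Fin n → V) (S : Finset (Fin n)) : Finset (V × V) :=
  S.image fun j => (v j, u j)

def completeByBackArcs (v u : Fin n → V) (F : Finset (V × V)) : Finset (V × V) :=
  F ∪ (univ.filter fun j => (v j, u j) ∉ F).image fun j => (u j, v j)

theorem mem_forwardArcs {S : Finset (Fin n)} {a b : V} :
    (a, b) ∈ forwardArcs v u S ↔ ∃ j ∈ S, v j = a ∧ u j = b := by
  simp [forwardArcs]

theorem mem_completeByBackArcs {F : Finset (V × V)} {a b : V} :
    (a, b) ∈ completeByBackArcs v u F ↔
      (a, b) ∈ F ∨ ∃ j, (v j, u j) ∉ F ∧ u j = a ∧ v j = b := by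
  simp [completeByBackArcs]

namespace IsPendantMatching

variable (hP : IsPendantMatching G v u)
include hP

theorem isDirectedForest_forwardArcs (S : Finset (Fin n)) :
    IsDirectedForest G.Adj (forwardArcs v u S) := by
  refine ⟨fun ⟨a, b⟩ hab => ?_, fun x y y' hy hy' => ?_, ?_⟩
  · obtain ⟨j, -, rfl, rfl⟩ := mem_forwardArcs.mp hab
    exact hP.adj j
  · obtain ⟨j, -, rfl, rfl⟩ := mem_forwardArcs.mp hy
    obtain ⟨k, -, rfl, hk⟩ := mem_forwardArcs.mp hy'
    rw [hP.nonleaf_injective hk]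
  · refine not_isDipath_self_of_continued (F := ∅) ?_ fun a b c hab hbc => ?_
    · rintro x (_ | ⟨b, p⟩) hp ⟨hxb, -⟩
      exacts [hp rfl, notMem_empty _ hxb]
    · obtain ⟨j, -, -, rfl⟩ := mem_forwardArcs.mp hab
      obtain ⟨k, -, hk, -⟩ := mem_forwardArcs.mp hbc
      exact absurd hk (hP.leaf_ne_nonleaf k j)

theorem isDirectedForest_completeByBackArcs {F : Finset (V × V)}
    (hF : IsDirectedForest G.Adj F) : IsDirectedForest G.Adj (completeByBackArcs v u F) := by
  have tail_of_leaf : ∀ a j, (a, v j) ∈ completeByBackArcs v u F → a = u j := by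
    intro a j h
    rcases mem_completeByBackArcs.mp h with h | ⟨k, -, rfl, hk⟩
    · exact hP.eq_of_adj j a (hF.1 _ h)
    · rw [hP.leaf_injective hk]
  refine ⟨fun ⟨a, b⟩ hab => ?_, fun x y y' hy hy' => ?_, ?_⟩
  · rcases mem_completeByBackArcs.mp hab with h | ⟨j, -, rfl, rfl⟩
    exacts [hF.1 _ h, (hP.adj j).symm]
  · rcases mem_completeByBackArcs.mp hy with h | ⟨j, -, -, rfl⟩
    · rcases mem_completeByBackArcs.mp hy' with h' | ⟨j, -, -, rfl⟩
      exacts [hF.2.1 x y y' h h', (tail_of_leaf y j hy).trans (tail_of_leaf y' j hy').symm]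
    · exact (tail_of_leaf y j hy).trans (tail_of_leaf y' j hy').symm
  · -- the only arc leaving the leaf `v j` is `v j → u j`, so an added arc `u j → v j` is a dead end
    refine not_isDipath_self_of_continued hF.2.2 fun a b c hab hbc => ?_
    rcases mem_completeByBackArcs.mp hab with h | ⟨j, hj, -, rfl⟩
    · exact h
    rcases mem_completeByBackArcs.mp hbc with h | ⟨k, -, hk, -⟩
    · exact absurd (hP.eq_of_adj j c (hF.1 _ h).symm ▸ h) hj
    · exact absurd hk (hP.leaf_ne_nonleaf j k).symm

end IsPendantMatching

end PendantMatching

section Weights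

variable {V : Type} [Fintype V] {n : ℕ} {v u : Fin n → V}

def inWeight (f : V × V → ℝ) (x : V) : ℝ := ∑ a, f (a, x)

/-- The weight on the arc `v j → u j` minus all the other weight entering `{v j, u j}`. -/
def pendantBalance (v u : Fin n → V) (f : V × V → ℝ) (j : Fin n) : ℝ :=
  2 * f (v j, u j) - (inWeight f (v j) + inWeight f (u j))

theorem sum_eq_sum_inWeight (f : V × V → ℝ) : ∑ c, f c = ∑ x, inWeight f x :=
  Fintype.sum_prod_type_right f

theorem inWeight_nonneg {f : V × V → ℝ} (hf : 0 ≤ f) (x : V) : 0 ≤ inWeight f x :=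
  sum_nonneg fun a _ => hf (a, x)

theorem continuous_pendantBalance : Continuous (pendantBalance (V := V) v u) :=
  continuous_pi fun j => by unfold pendantBalance inWeight; fun_prop

end Weights

section Balance

variable {V : Type} [DecidableEq V] {n : ℕ} {G : SimpleGraph V} {v u : Fin n → V}

def pendantPoint (v u : Fin n → V) (t s : Fin n → ℝ) : V × V → ℝ :=
  ∑ j, (Pi.single (v j, u j) (t j) + Pi.single (u j, v j) (s j))

/-- The point `y / ‖y‖₁` of the boundary of the cross-polytope whose vertices are the arcs
`v j → u j` (direction `+eⱼ`) and `u j → v j` (direction `-eⱼ`). -/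
noncomputable def crossPolytopePoint (v u : Fin n → V) (y : Fin n → ℝ) : V × V → ℝ :=
  pendantPoint v u ((∑ j, |y j|)⁻¹ • y⁺) ((∑ j, |y j|)⁻¹ • y⁻)

theorem pendantPoint_nonneg {t s : Fin n → ℝ} (ht : 0 ≤ t) (hs : 0 ≤ s) :
    0 ≤ pendantPoint v u t s :=
  sum_nonneg fun j _ => add_nonneg (Pi.single_nonneg.mpr (ht j)) (Pi.single_nonneg.mpr (hs j))

theorem exists_of_pendantPoint_ne_zero {t s : Fin n → ℝ} {c : V × V}
    (hc : pendantPoint v u t s c ≠ 0) :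
    ∃ j, (c = (v j, u j) ∧ t j ≠ 0) ∨ (c = (u j, v j) ∧ s j ≠ 0) := by
  simp only [pendantPoint, Finset.sum_apply, Pi.add_apply] at hc
  obtain ⟨j, -, hj⟩ := exists_ne_zero_of_sum_ne_zero hc
  refine ⟨j, ?_⟩
  by_contra! ⟨ht, hs⟩
  rw [Pi.single_apply, Pi.single_apply] at hj
  split_ifs at hj with e1 e2 e2
  · exact hj (by rw [ht e1, hs e2, add_zero])
  · exact hj (by rw [ht e1, add_zero])
  · exact hj (by rw [hs e2, add_zero])
  · exact hj (add_zero 0)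

theorem continuous_pendantPoint :
    Continuous fun p : (Fin n → ℝ) × (Fin n → ℝ) => pendantPoint (V := V) v u p.1 p.2 :=
  continuous_finsetSum _ fun j _ =>
    ((continuous_single (A := fun _ : V × V => ℝ) (v j, u j)).comp
        ((continuous_apply j).comp continuous_fst)).add
      ((continuous_single (A := fun _ : V × V => ℝ) (u j, v j)).comp
        ((continuous_apply j).comp continuous_snd))

theorem continuousOn_crossPolytopePoint :
    ContinuousOn (crossPolytopePoint (V := V) v u) {y | y ≠ 0} := by
  have hN : ContinuousOn (fun y : Fin n → ℝ => (∑ j, |y j|)⁻¹) {y | y ≠ 0} :=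
    ContinuousOn.inv₀ (by fun_prop) fun y hy => (sum_abs_pos hy).ne'
  have hpos : Continuous fun y : Fin n → ℝ => y⁺ := by simp only [Pi.posPart_def]; fun_prop
  have hneg : Continuous fun y : Fin n → ℝ => y⁻ := by simp only [Pi.negPart_def]; fun_prop
  have h := continuous_pendantPoint (V := V) (v := v) (u := u) |>.comp_continuousOn
    ((hN.smul hpos.continuousOn).prodMk (hN.smul hneg.continuousOn))
  exact h

theorem IsPendantMatching.pendantPoint_apply_forward (hP : IsPendantMatching G v u)
    (t s : Fin n → ℝ) (i : Fin n) : pendantPoint v u t s (v i, u i) = t i := by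
  simp [pendantPoint, Finset.sum_apply, Pi.single_apply, hP.leaf_injective.eq_iff,
    hP.nonleaf_injective.eq_iff, hP.leaf_ne_nonleaf]

variable [Fintype V]

theorem sum_pendantPoint (t s : Fin n → ℝ) :
    ∑ c, pendantPoint v u t s c = ∑ j, (t j + s j) := by
  simp only [pendantPoint, Finset.sum_apply, Pi.add_apply]
  rw [sum_comm]
  simp [sum_add_distrib]

theorem inWeight_pendantPoint (t s : Fin n → ℝ) (x : V) :
    inWeight (pendantPoint v u t s) x =
      ∑ j, ((if u j = x then t j else 0) + if v j = x then s j else 0) := by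
  simp only [inWeight, pendantPoint, Finset.sum_apply, Pi.add_apply]
  rw [sum_comm]
  refine sum_congr rfl fun j _ => ?_
  simp only [Pi.single_apply, Prod.mk.injEq, ite_and, sum_add_distrib, sum_ite_eq', mem_univ,
    if_true, eq_comm]

theorem crossPolytopePoint_mem_simplexFace {y : Fin n → ℝ} (hy : y ≠ 0) {F : Finset (V × V)}
    (hpos : ∀ j, 0 < y j → (v j, u j) ∈ F) (hneg : ∀ j, y j < 0 → (v j, u j) ∉ F) :
    crossPolytopePoint v u y ∈ simplexFace (completeByBackArcs v u F) := by
  have hN := sum_abs_pos hy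
  refine ⟨pendantPoint_nonneg ?_ ?_, ?_, fun c hc => ?_⟩
  · exact smul_nonneg (inv_nonneg.mpr hN.le) (posPart_nonneg y)
  · exact smul_nonneg (inv_nonneg.mpr hN.le) (negPart_nonneg y)
  · simp only [crossPolytopePoint, sum_pendantPoint, Pi.smul_apply, smul_eq_mul, ← mul_add,
      ← mul_sum, Pi.posPart_apply, Pi.negPart_apply, posPart_add_negPart]
    exact inv_mul_cancel₀ hN.ne'
  · obtain ⟨j, ⟨rfl, hj⟩ | ⟨rfl, hj⟩⟩ := exists_of_pendantPoint_ne_zero hc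
    · have : 0 < y j := by simpa [posPart_eq_zero] using right_ne_zero_of_mul hj
      exact mem_union_left _ (hpos j this)
    · have : y j < 0 := by simpa [negPart_eq_zero] using right_ne_zero_of_mul hj
      exact mem_completeByBackArcs.mpr (.inr ⟨j, hneg j this, rfl, rfl⟩)

namespace IsPendantMatching

variable (hP : IsPendantMatching G v u)
include hP

theorem inWeight_pendantPoint_nonleaf (t s : Fin n → ℝ) (i : Fin n) :
    inWeight (pendantPoint v u t s) (u i) = t i := by
  simp [inWeight_pendantPoint, hP.nonleaf_injective.eq_iff, hP.leaf_ne_nonleaf]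

theorem inWeight_pendantPoint_leaf (t s : Fin n → ℝ) (i : Fin n) :
    inWeight (pendantPoint v u t s) (v i) = s i := by
  simp [inWeight_pendantPoint, hP.leaf_injective.eq_iff, (hP.leaf_ne_nonleaf _ _).symm]

theorem pendantBalance_pendantPoint (t s : Fin n → ℝ) :
    pendantBalance v u (pendantPoint v u t s) = t - s := by
  funext i
  rw [pendantBalance, hP.pendantPoint_apply_forward, hP.inWeight_pendantPoint_leaf,
    hP.inWeight_pendantPoint_nonleaf, Pi.sub_apply]
  ring

theorem pendantBalance_crossPolytopePoint (y : Fin n → ℝ) :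
    pendantBalance v u (crossPolytopePoint v u y) = (∑ j, |y j|)⁻¹ • y := by
  rw [crossPolytopePoint, hP.pendantBalance_pendantPoint, ← smul_sub, posPart_sub_negPart]

section Support

variable {f : V × V → ℝ} {F : Finset (V × V)} (hf : f ∈ simplexFace F)
  (hF : IsDirectedForest G.Adj F)
include hf hF

/-- Once the arc `v j → u j` carries weight, in-degree one at `u j` and the absence of the
2-cycle `u j → v j → u j` leave no other weight entering `{v j, u j}`. -/
theorem pendantBalance_eq_of_ne_zero {j : Fin n} (hj : f (v j, u j) ≠ 0) :
    pendantBalance v u f j = f (v j, u j) := by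
  have hjF : (v j, u j) ∈ F := hf.2.2 _ hj
  have hin_nonleaf : inWeight f (u j) = f (v j, u j) := by
    refine sum_eq_single (v j) (fun a _ ha => ?_) (by simp)
    by_contra h
    exact ha (hF.2.1 _ _ _ (hf.2.2 _ h) hjF)
  have hin_leaf : inWeight f (v j) = 0 := by
    refine sum_eq_zero fun a _ => ?_
    by_contra h
    have haF := hf.2.2 _ h
    obtain rfl := hP.eq_of_adj j a (hF.1 _ haF)
    exact hF.not_mem_swap hjF haF
  rw [pendantBalance, hin_nonleaf, hin_leaf]
  ring

theorem pendantBalance_pos_iff {j : Fin n} :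
    0 < pendantBalance v u f j ↔ f (v j, u j) ≠ 0 := by
  refine ⟨fun h hj => ?_, fun hj => ?_⟩
  · rw [pendantBalance, hj] at h
    linarith [inWeight_nonneg hf.1 (v j), inWeight_nonneg hf.1 (u j)]
  · rw [hP.pendantBalance_eq_of_ne_zero hf hF hj]
    exact (hf.1 _).lt_of_ne' hj

theorem pendantBalance_ne_zero : pendantBalance v u f ≠ 0 := by
  intro h0
  have hblock (j : Fin n) : inWeight f (v j) + inWeight f (u j) = 0 := by
    have hj : f (v j, u j) = 0 := by
      by_contra hj
      exact ((hP.pendantBalance_pos_iff hf hF).mpr hj).ne' (congrFun h0 j)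
    have := congrFun h0 j
    rw [pendantBalance, hj, Pi.zero_apply] at this
    linarith
  have htotal := hf.2.1
  rw [sum_eq_sum_inWeight, hP.sum_eq, sum_congr rfl fun j _ => hblock j, sum_const_zero]
    at htotal
  exact zero_ne_one htotal

end Support

end IsPendantMatching

end Balance

namespace IsPendantMatching

open NormedSpace

variable {V : Type} [Fintype V] [DecidableEq V] {n : ℕ} {G : SimpleGraph V} {v u : Fin n → V}
  (hP : IsPendantMatching G v u)
include hP

theorem crossPolytopePoint_mem_geomRealization {y : Fin n → ℝ} (hy : y ≠ 0) :
    crossPolytopePoint v u y ∈ geomRealization (IsDirectedForest G.Adj) := by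
  refine simplexFace_subset_geomRealization
    (hP.isDirectedForest_completeByBackArcs (hP.isDirectedForest_forwardArcs {j | 0 < y j}))
    (crossPolytopePoint_mem_simplexFace hy
      (fun j hj => mem_forwardArcs.mpr ⟨j, by simpa using hj, rfl, rfl⟩) fun j hj hmem => ?_)
  obtain ⟨k, hk, hkj, -⟩ := mem_forwardArcs.mp hmem
  rw [hP.leaf_injective hkj, mem_filter] at hk
  exact hj.not_gt hk.2

noncomputable def toSphere :
    C(geomRealization (IsDirectedForest G.Adj), Metric.sphere (0 : EuclideanSpace ℝ (Fin n)) 1) :=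
  have hne (f : geomRealization (IsDirectedForest G.Adj)) :
      WithLp.toLp 2 (pendantBalance v u f) ≠ 0 := by
    rw [Ne, WithLp.toLp_eq_zero]
    exact hP.pendantBalance_ne_zero (mem_simplexFace_support f.2) (support_isDirectedForest f.2)
  have hg : Continuous fun f : geomRealization (IsDirectedForest G.Adj) =>
      WithLp.toLp 2 (pendantBalance v u f) :=
    (PiLp.continuous_toLp 2 _).comp (continuous_pendantBalance.comp continuous_subtype_val)
  { toFun f := ⟨normalize (WithLp.toLp 2 (pendantBalance v u f)),
      mem_sphere_zero_iff_norm.mpr (norm_normalize (hne f))⟩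
    continuous_toFun :=
      ((hg.norm.inv₀ fun f => norm_ne_zero_iff.mpr (hne f)).smul hg).subtype_mk _ }

noncomputable def ofSphere :
    C(Metric.sphere (0 : EuclideanSpace ℝ (Fin n)) 1, geomRealization (IsDirectedForest G.Adj)) :=
  { toFun y := ⟨crossPolytopePoint v u (y : EuclideanSpace ℝ (Fin n)).ofLp,
      hP.crossPolytopePoint_mem_geomRealization (ofLp_ne_zero_of_mem_unit_sphere y)⟩
    continuous_toFun :=
      (continuousOn_crossPolytopePoint.comp_continuous
        ((PiLp.continuous_ofLp 2 _).comp continuous_subtype_val)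
        ofLp_ne_zero_of_mem_unit_sphere).subtype_mk _ }

theorem toSphere_ofSphere (y : Metric.sphere (0 : EuclideanSpace ℝ (Fin n)) 1) :
    hP.toSphere (hP.ofSphere y) = y := by
  apply Subtype.ext
  change normalize (WithLp.toLp 2 (pendantBalance v u (crossPolytopePoint v u _))) = _
  rw [hP.pendantBalance_crossPolytopePoint, WithLp.toLp_smul, WithLp.toLp_ofLp,
    normalize_smul_of_pos (inv_pos.mpr (sum_abs_pos _)),
    normalize_eq_self_of_norm_eq_one (mem_sphere_zero_iff_norm.mp y.2)]
  exact ofLp_ne_zero_of_mem_unit_sphere y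

theorem segment_ofSphere_toSphere_subset (f : geomRealization (IsDirectedForest G.Adj)) :
    segment ℝ (hP.ofSphere (hP.toSphere f) : V × V → ℝ) f ⊆
      geomRealization (IsDirectedForest G.Adj) := by
  have hF := support_isDirectedForest f.2
  have hf := mem_simplexFace_support f.2
  let y : EuclideanSpace ℝ (Fin n) := hP.toSphere f
  have hy (j : Fin n) :
      y j = ‖WithLp.toLp 2 (pendantBalance v u f)‖⁻¹ * pendantBalance v u f j :=
    rfl
  refine ((convex_simplexFace _).segment_subset (crossPolytopePoint_mem_simplexFace
    (ofLp_ne_zero_of_mem_unit_sphere (hP.toSphere f))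
    (fun j hj => ?_) fun j hj => ?_) (simplexFace_mono subset_union_left hf)).trans
    (simplexFace_subset_geomRealization (hP.isDirectedForest_completeByBackArcs hF))
  · rw [hy] at hj
    simpa using (hP.pendantBalance_pos_iff hf hF).mp (pos_of_mul_pos_right hj (by positivity))
  · rw [hy] at hj
    have := neg_of_mul_neg_right hj (by positivity)
    simpa [← hP.pendantBalance_pos_iff hf hF] using this.le

end IsPendantMatching

theorem forestComplex_basicTree_sphere_general {V : Type} [Fintype V] [DecidableEq V] (n : ℕ)
    (G : SimpleGraph V) [DecidableRel G.Adj] (v u : Fin n → V)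
    (hbasic : IsBasicTree n G v u) :
    Nonempty (ContinuousMap.HomotopyEquiv
      ↥(geomRealization fun F : Finset (V × V) => IsDirectedForest G.Adj F)
      ↥(Metric.sphere (0 : EuclideanSpace ℝ (Fin n)) 1)) :=
  have hP := hbasic.isPendantMatching
  ContinuousMap.HomotopyEquiv.nonempty_of_segment_subset hP.toSphere hP.ofSphere
    hP.toSphere_ofSphere hP.segment_ofSphere_toSphere_subset

/-- For a basic tree `T` with `2n` vertices whose double direction is `D`, the complex of
directed trees `Δ(D)` is homotopy equivalent to the sphere `S^{n-1}` (the unit sphere in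
`ℝ^n`). -/
theorem forestComplex_basicTree_sphere {V : Type} [Fintype V] [DecidableEq V] (n : ℕ)
    (hn : 1 ≤ n) (G : SimpleGraph V) [DecidableRel G.Adj] (v u : Fin n → V)
    (hbasic : IsBasicTree n G v u) :
    Nonempty (ContinuousMap.HomotopyEquiv
      ↥(geomRealization fun F : Finset (V × V) => IsDirectedForest G.Adj F)
      ↥(Metric.sphere (0 : EuclideanSpace ℝ (Fin n)) 1)) :=
  forestComplex_basicTree_sphere_general n G v u hbasic
end
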